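/- arXiv:2502.18237 — 2 statements merged into one kernel-verified Lean document; each statement's English description precedes it below -/
import Mathlib

section
/- Guaranteed satisfaction of DRL (Theorem 1): let Π be a finite satisfiable set of constraints over variables x_1,…,x_D, and let Π_{D} = Π, Π_{D-1}, …, Π_0 be the sets obtained by iterated disjunctive elimination, where Π_{i-1} is logically equivalent to ∃ x_i, ⋀ Π_i and each assignment to x_1,…,x_{i-1} satisfying Π_{i-1} extends to satisfy Π_i. Define DRL on an input x̃ ∈ ℝ^D recursively: at step i, substitute the already-fixed values DRL(x̃)_1,…,DRL(x̃)_{i-1} into Π_i to get a satisfiable single-variable constraint set Π̃_i in x_i, and set DRL(x̃)_i to x̃_i if it satisfies Π̃_i, and otherwise to the closest satisfying boundary of Π̃_i. Then DRL(x̃) satisfies all constraints in Π. -/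
open scoped Classical

namespace DisjElim

/-- A linear inequality `∑ k, w k * x k + b ≥ 0` over the variables `x_1, …, x_D`. -/
structure Ineq (D : ℕ) where
  w : Fin D → ℝ
  b : ℝ

/-- The value of the linear expression of an inequality at a point. -/
def Ineq.eval {D : ℕ} (ι : Ineq D) (x : Fin D → ℝ) : ℝ := ∑ k, ι.w k * x k + ι.b

/-- A constraint: a finite disjunction of linear inequalities. -/
abbrev Constraint (D : ℕ) := Finset (Ineq D)

/-- `x` satisfies a constraint iff it satisfies some disjunct. -/
def Constraint.Sat {D : ℕ} (C : Constraint D) (x : Fin D → ℝ) : Prop :=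
  ∃ ι ∈ C, ι.eval x ≥ 0

/-- `x` satisfies a set of constraints iff it satisfies every constraint in the set. -/
def SatAll {D : ℕ} (Pi : Finset (Constraint D)) (x : Fin D → ℝ) : Prop :=
  ∀ C ∈ Pi, C.Sat x

/-- The variable `x_i` occurs positively in the constraint. -/
def hasPos {D : ℕ} (i : Fin D) (C : Constraint D) : Prop := ∃ ι ∈ C, 0 < ι.w i

/-- The variable `x_i` occurs negatively in the constraint. -/
def hasNeg {D : ℕ} (i : Fin D) (C : Constraint D) : Prop := ∃ ι ∈ C, ι.w i < 0

/-- The CP resolution rule on `x_i` between `Ψ` (whose positive-occurrence disjuncts are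
resolved) and `Ψ'` (whose negative-occurrence disjuncts are resolved): the disjunction of
all resolvents `φ/w_i(Ψ-part) - φ'/w'_i(Ψ'-part) ≥ 0` together with the remaining
disjuncts `Φ` of `Ψ` and `Φ'` of `Ψ'`. -/
noncomputable def CPres {D : ℕ} (i : Fin D) (Ψ Ψ' : Constraint D) : Constraint D :=
  ((Ψ.filter (fun ι => 0 < ι.w i)) ×ˢ (Ψ'.filter (fun ι => ι.w i < 0))).image
    (fun p => (⟨fun k => p.1.w k / p.1.w i - p.2.w k / p.2.w i,
                p.1.b / p.1.w i - p.2.b / p.2.w i⟩ : Ineq D))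
    ∪ Ψ.filter (fun ι => ¬ 0 < ι.w i) ∪ Ψ'.filter (fun ι => ¬ ι.w i < 0)

/-- `Π_i^+`: constraints with positive and without negative occurrences of `x_i`. -/
noncomputable def posPart {D : ℕ} (i : Fin D) (Pi : Finset (Constraint D)) :
    Finset (Constraint D) :=
  Pi.filter (fun C => hasPos i C ∧ ¬ hasNeg i C)

/-- `Π_i^-`: constraints with negative and without positive occurrences of `x_i`. -/
noncomputable def negPart {D : ℕ} (i : Fin D) (Pi : Finset (Constraint D)) :
    Finset (Constraint D) :=
  Pi.filter (fun C => ¬ hasPos i C ∧ hasNeg i C)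

/-- `Π_i^±`: constraints with both positive and negative occurrences of `x_i`. -/
noncomputable def mixPart {D : ℕ} (i : Fin D) (Pi : Finset (Constraint D)) :
    Finset (Constraint D) :=
  Pi.filter (fun C => hasPos i C ∧ hasNeg i C)

/-- Constraints in which `x_i` does not occur. -/
noncomputable def freePart {D : ℕ} (i : Fin D) (Pi : Finset (Constraint D)) :
    Finset (Constraint D) :=
  Pi.filter (fun C => ¬ hasPos i C ∧ ¬ hasNeg i C)

/-- `Π_i^k`: the `k`-fold CP resolution of `Π_i^+` against the mixed part `Π_i^±`. -/
noncomputable def iterRes {D : ℕ} (i : Fin D) (pm : Finset (Constraint D))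
    (p0 : Finset (Constraint D)) : ℕ → Finset (Constraint D)
  | 0 => p0
  | k + 1 => ((iterRes i pm p0 k) ×ˢ pm).image (fun p => CPres i p.1 p.2)

/-- `Π_i^{++} = ⋃_{k=0}^{|Π_i^±|} Π_i^k`. -/
noncomputable def closurePlus {D : ℕ} (i : Fin D) (Pi : Finset (Constraint D)) :
    Finset (Constraint D) :=
  (Finset.range ((mixPart i Pi).card + 1)).biUnion
    (fun k => iterRes i (mixPart i Pi) (posPart i Pi) k)

/-- One step of disjunctive variable elimination:
`Π_{i-1} = (Π_i` minus all constraints containing `x_i) ∪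
{CPres_i(Ψ, Ψ') : Ψ ∈ Π_i^{++}, Ψ' ∈ Π_i^-}`. -/
noncomputable def elimVar {D : ℕ} (i : Fin D) (Pi : Finset (Constraint D)) :
    Finset (Constraint D) :=
  freePart i Pi ∪ ((closurePlus i Pi) ×ˢ (negPart i Pi)).image (fun p => CPres i p.1 p.2)

end DisjElim

namespace DisjElim

/-- The elimination sequence: `piSeq Π k` is the paper's `Π_{D-k}`; i.e. `piSeq Π 0 = Π_D = Π`
and `piSeq Π (k+1)` eliminates the variable `x_{D-k}` (0-based index `D-1-k`) from
`piSeq Π k`. In particular `Π_i = piSeq Π (D - i)` and `Π_0 = piSeq Π D`. -/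
noncomputable def piSeq {D : ℕ} (Pi : Finset (Constraint D)) : ℕ → Finset (Constraint D)
  | 0 => Pi
  | k + 1 =>
      if h : D - 1 - k < D then elimVar ⟨D - 1 - k, h⟩ (piSeq Pi k) else piSeq Pi k

/-- The feasible set for the single variable `x_i` obtained by substituting the values `v`
for the other variables into the constraint set. -/
def Feas {D : ℕ} (Pi : Finset (Constraint D)) (i : Fin D) (v : Fin D → ℝ) : Set ℝ :=
  {t : ℝ | SatAll Pi (Function.update v i t)}

/-- Single-variable refinement: return `t` if it is feasible, otherwise the feasible value
nearest to `t` (choosing the closest satisfying left/right boundary, the right one on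
ties), expressed via suprema/infima in the extended reals. -/
noncomputable def refine (S : Set ℝ) (t : ℝ) : ℝ :=
  if t ∈ S then t
  else if (t : EReal) - sSup ((fun s : ℝ => (s : EReal)) '' (S ∩ Set.Iio t)) <
      sInf ((fun s : ℝ => (s : EReal)) '' (S ∩ Set.Ioi t)) - (t : EReal) then
    (sSup ((fun s : ℝ => (s : EReal)) '' (S ∩ Set.Iio t))).toReal
  else
    (sInf ((fun s : ℝ => (s : EReal)) '' (S ∩ Set.Ioi t))).toReal

/-- The forward pass of DRL: `drlAux Π x̃ k` has the first `k` coordinates refined.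
At step `k` the coordinate `x_{k+1}` (0-based index `k`) is set to the value of
`Π̃_{k+1}` (the substituted single-variable version of `Π_{k+1} = piSeq Π (D-1-k)`)
nearest to `x̃_{k+1}`. -/
noncomputable def drlAux {D : ℕ} (Pi : Finset (Constraint D)) (x : Fin D → ℝ) :
    ℕ → (Fin D → ℝ)
  | 0 => x
  | k + 1 =>
      if h : k < D then
        Function.update (drlAux Pi x k) ⟨k, h⟩
          (refine (Feas (piSeq Pi (D - 1 - k)) ⟨k, h⟩ (drlAux Pi x k)) (x ⟨k, h⟩))
      else drlAux Pi x k

/-- The Disjunctive Refinement Layer on `ℝ^D`. -/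
noncomputable def DRL {D : ℕ} (Pi : Finset (Constraint D)) (x : Fin D → ℝ) : Fin D → ℝ :=
  drlAux Pi x D

end DisjElim

namespace DisjElim

variable {D : ℕ}

section Single

variable (i : Fin D) (x : Fin D → ℝ)

/-- The constant part of a disjunct, as a function of the `i`-th coordinate. -/
noncomputable def cv (ι : Ineq D) : ℝ := ι.eval x - ι.w i * x i

lemma eval_split (ι : Ineq D) (y : Fin D → ℝ) :
    ι.eval y = ι.w i * y i + (∑ k ∈ Finset.univ.erase i, ι.w k * y k + ι.b) := by
  unfold Ineq.eval
  rw [← Finset.add_sum_erase _ _ (Finset.mem_univ i), add_assoc]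

lemma eval_update (ι : Ineq D) (t : ℝ) :
    ι.eval (Function.update x i t) = ι.w i * t + cv i x ι := by
  unfold cv
  rw [eval_split i ι (Function.update x i t), eval_split i ι x]
  have h2 : ∑ k ∈ Finset.univ.erase i, ι.w k * Function.update x i t k
      = ∑ k ∈ Finset.univ.erase i, ι.w k * x k := by
    apply Finset.sum_congr rfl; intro k hk
    rw [Function.update_of_ne (Finset.ne_of_mem_erase hk)]
  rw [Function.update_self, h2]; ring

lemma eval_self (ι : Ineq D) : ι.eval x = ι.w i * x i + cv i x ι := by
  unfold cv; ring

/-- The boundary value of a disjunct. -/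
noncomputable def bnd (ι : Ineq D) : ℝ := -(cv i x ι) / ι.w i

lemma sat_pos {ι : Ineq D} (h : 0 < ι.w i) (t : ℝ) :
    0 ≤ ι.eval (Function.update x i t) ↔ bnd i x ι ≤ t := by
  rw [eval_update]; unfold bnd
  rw [div_le_iff₀ h]
  constructor <;> intro h' <;> nlinarith

lemma sat_neg {ι : Ineq D} (h : ι.w i < 0) (t : ℝ) :
    0 ≤ ι.eval (Function.update x i t) ↔ t ≤ bnd i x ι := by
  rw [eval_update]; unfold bnd
  rw [le_div_iff_of_neg h]
  constructor <;> intro h' <;> nlinarith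

lemma sat_zero {ι : Ineq D} (h : ι.w i = 0) (t : ℝ) :
    ι.eval (Function.update x i t) = cv i x ι := by
  rw [eval_update, h]; ring

/-- Some variable-free disjunct of `C` is satisfied. -/
def zsat (C : Constraint D) : Prop := ∃ ι ∈ C, ι.w i = 0 ∧ 0 ≤ cv i x ι

/-- The infimum of the feasible `t`-set of a constraint without negative occurrences. -/
noncomputable def lval (C : Constraint D) : EReal :=
  ((C.filter fun ι => 0 < ι.w i).inf fun ι => ((bnd i x ι : ℝ) : EReal)) ⊓
    (if zsat i x C then (⊥ : EReal) else ⊤)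

/-- The supremum of the feasible `t`-set of a constraint without positive occurrences. -/
noncomputable def uval (C : Constraint D) : EReal :=
  ((C.filter fun ι => ι.w i < 0).sup fun ι => ((bnd i x ι : ℝ) : EReal)) ⊔
    (if zsat i x C then (⊤ : EReal) else ⊥)

lemma lval_le_bnd {C : Constraint D} {ι : Ineq D} (hι : ι ∈ C) (h : 0 < ι.w i) :
    lval i x C ≤ ((bnd i x ι : ℝ) : EReal) :=
  le_trans inf_le_left (Finset.inf_le (Finset.mem_filter.2 ⟨hι, h⟩))

lemma bnd_le_uval {C : Constraint D} {ι : Ineq D} (hι : ι ∈ C) (h : ι.w i < 0) :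
    ((bnd i x ι : ℝ) : EReal) ≤ uval i x C := by
  refine le_trans ?_ le_sup_left
  exact Finset.le_sup (f := fun ι => ((bnd i x ι : ℝ) : EReal))
    (Finset.mem_filter.2 ⟨hι, h⟩)

lemma lval_bot {C : Constraint D} (h : zsat i x C) : lval i x C = ⊥ := by
  simp [lval, h]

lemma uval_top {C : Constraint D} (h : zsat i x C) : uval i x C = ⊤ := by
  simp [uval, h]

lemma lval_lt_top {C : Constraint D} (h : hasPos i C) : lval i x C < ⊤ := by
  obtain ⟨ι, hι, hw⟩ := h
  exact lt_of_le_of_lt (lval_le_bnd i x hι hw) (EReal.coe_lt_top _)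

lemma bot_lt_uval {C : Constraint D} (h : hasNeg i C) : ⊥ < uval i x C := by
  obtain ⟨ι, hι, hw⟩ := h
  exact lt_of_lt_of_le (EReal.bot_lt_coe _) (bnd_le_uval i x hι hw)

lemma sat_of_lval_le {C : Constraint D} {t : ℝ} (h : lval i x C ≤ (t : EReal)) :
    C.Sat (Function.update x i t) := by
  by_cases hz : zsat i x C
  · obtain ⟨ι, hι, hw, hc⟩ := hz
    exact ⟨ι, hι, by rw [ge_iff_le, sat_zero i x hw]; exact hc⟩
  · simp only [lval, hz, if_neg, inf_top_eq] at h
    have hne : (C.filter fun ι => 0 < ι.w i).Nonempty := by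
      by_contra hemp
      rw [Finset.not_nonempty_iff_eq_empty] at hemp
      rw [hemp] at h
      simp at h
    obtain ⟨ι, hι, heq⟩ := Finset.exists_mem_eq_inf _ hne
      (fun ι => ((bnd i x ι : ℝ) : EReal))
    rw [heq] at h
    rw [Finset.mem_filter] at hι
    exact ⟨ι, hι.1, (sat_pos i x hι.2 t).2 (EReal.coe_le_coe_iff.1 h)⟩

lemma sat_of_le_uval {C : Constraint D} {t : ℝ} (h : (t : EReal) ≤ uval i x C) :
    C.Sat (Function.update x i t) := by
  by_cases hz : zsat i x C
  · obtain ⟨ι, hι, hw, hc⟩ := hz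
    exact ⟨ι, hι, by rw [ge_iff_le, sat_zero i x hw]; exact hc⟩
  · simp only [uval, hz, if_neg, sup_bot_eq] at h
    have hne : (C.filter fun ι => ι.w i < 0).Nonempty := by
      by_contra hemp
      rw [Finset.not_nonempty_iff_eq_empty] at hemp
      rw [hemp] at h
      simp at h
    obtain ⟨ι, hι, heq⟩ := Finset.exists_mem_eq_sup _ hne
      (fun ι => ((bnd i x ι : ℝ) : EReal))
    rw [heq] at h
    rw [Finset.mem_filter] at hι
    exact ⟨ι, hι.1, (sat_neg i x hι.2 t).2 (EReal.coe_le_coe_iff.1 h)⟩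

end Single

end DisjElim
namespace DisjElim

variable {D : ℕ}

section Res

variable (i : Fin D) (x : Fin D → ℝ)

/-- The resolvent of two disjuncts. -/
noncomputable def rsv (ι ι' : Ineq D) : Ineq D :=
  ⟨fun k => ι.w k / ι.w i - ι'.w k / ι'.w i, ι.b / ι.w i - ι'.b / ι'.w i⟩

lemma eval_rsv (ι ι' : Ineq D) (y : Fin D → ℝ) :
    (rsv i ι ι').eval y = ι.eval y / ι.w i - ι'.eval y / ι'.w i := by
  unfold rsv Ineq.eval
  simp only [sub_mul, div_mul_eq_mul_div]
  rw [Finset.sum_sub_distrib, ← Finset.sum_div, ← Finset.sum_div]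
  ring

lemma mem_CPres {ρ : Ineq D} {Ψ Ψ' : Constraint D} :
    ρ ∈ CPres i Ψ Ψ' ↔
      (∃ ι ∈ Ψ, ∃ ι' ∈ Ψ', 0 < ι.w i ∧ ι'.w i < 0 ∧ ρ = rsv i ι ι') ∨
      (ρ ∈ Ψ ∧ ¬ 0 < ρ.w i) ∨ (ρ ∈ Ψ' ∧ ¬ ρ.w i < 0) := by
  unfold CPres rsv
  simp only [Finset.mem_union, Finset.mem_image, Finset.mem_product, Finset.mem_filter,
    Prod.exists]
  constructor
  · rintro ((⟨a, b, ⟨⟨ha, ha'⟩, hb, hb'⟩, rfl⟩ | h) | h)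
    · exact Or.inl ⟨a, ha, b, hb, ha', hb', rfl⟩
    · exact Or.inr (Or.inl h)
    · exact Or.inr (Or.inr h)
  · rintro (⟨a, ha, b, hb, ha', hb', rfl⟩ | h | h)
    · exact Or.inl (Or.inl ⟨a, b, ⟨⟨ha, ha'⟩, hb, hb'⟩, rfl⟩)
    · exact Or.inl (Or.inr h)
    · exact Or.inr h

lemma rsv_w_self {ι ι' : Ineq D} (h : 0 < ι.w i) (h' : ι'.w i < 0) :
    (rsv i ι ι').w i = 0 := by
  unfold rsv
  simp only
  rw [div_self h.ne', div_self h'.ne, sub_self]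

/-- Soundness of the resolution rule. -/
lemma cpres_sound {Ψ Ψ' : Constraint D} {y : Fin D → ℝ}
    (h1 : Ψ.Sat y) (h2 : Ψ'.Sat y) : (CPres i Ψ Ψ').Sat y := by
  obtain ⟨ι, hι, hev⟩ := h1
  by_cases hw : 0 < ι.w i
  · obtain ⟨ι', hι', hev'⟩ := h2
    by_cases hw' : ι'.w i < 0
    · refine ⟨rsv i ι ι', (mem_CPres i).2 (Or.inl ⟨ι, hι, ι', hι', hw, hw', rfl⟩), ?_⟩
      rw [ge_iff_le, eval_rsv]
      have ha : 0 ≤ ι.eval y / ι.w i := div_nonneg hev hw.le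
      have hb : ι'.eval y / ι'.w i ≤ 0 := div_nonpos_of_nonneg_of_nonpos hev' hw'.le
      linarith
    · exact ⟨ι', (mem_CPres i).2 (Or.inr (Or.inr ⟨hι', hw'⟩)), hev'⟩
  · exact ⟨ι, (mem_CPres i).2 (Or.inr (Or.inl ⟨hι, hw⟩)), hev⟩

lemma cpres_nonneg {Ψ C₀ : Constraint D} (hΨ : ¬ hasNeg i Ψ) :
    ¬ hasNeg i (CPres i Ψ C₀) := by
  rintro ⟨ρ, hρ, hneg⟩
  rcases (mem_CPres i).1 hρ with ⟨ι, hι, ι', hι', hw, hw', rfl⟩ | ⟨hmem, _⟩ | ⟨_, hnot⟩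
  · rw [rsv_w_self i hw hw'] at hneg; exact lt_irrefl 0 hneg
  · exact hΨ ⟨ρ, hmem, hneg⟩
  · exact hnot hneg

lemma cv_rsv {ι ι' : Ineq D} (h : 0 < ι.w i) (h' : ι'.w i < 0) :
    cv i x (rsv i ι ι') = bnd i x ι' - bnd i x ι := by
  have hne : ι.w i ≠ 0 := h.ne'
  have hne' : ι'.w i ≠ 0 := h'.ne
  show (rsv i ι ι').eval x - (rsv i ι ι').w i * x i = _
  rw [rsv_w_self i h h', eval_rsv, eval_self i x ι, eval_self i x ι']
  show _ = -(cv i x ι') / ι'.w i - -(cv i x ι) / ι.w i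
  field_simp
  ring

/-- Extraction of the bound inequality from a satisfied resolution constraint
against a purely negative constraint. -/
lemma sat_cpres_neg {Ψ Ψ' : Constraint D} (hΨ : ¬ hasNeg i Ψ) (hΨ' : ¬ hasPos i Ψ')
    (hx : (CPres i Ψ Ψ').Sat x) : lval i x Ψ ≤ uval i x Ψ' := by
  obtain ⟨ρ, hρ, hev⟩ := hx
  rcases (mem_CPres i).1 hρ with ⟨ι, hι, ι', hι', hw, hw', rfl⟩ | ⟨hmem, hnot⟩ | ⟨hmem, hnot⟩
  · have h0 : (rsv i ι ι').w i = 0 := rsv_w_self i hw hw'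
    have : 0 ≤ cv i x (rsv i ι ι') := by
      unfold cv; rw [h0]; simpa using hev
    rw [cv_rsv i x hw hw'] at this
    calc lval i x Ψ ≤ ((bnd i x ι : ℝ) : EReal) := lval_le_bnd i x hι hw
      _ ≤ ((bnd i x ι' : ℝ) : EReal) := EReal.coe_le_coe_iff.2 (by linarith)
      _ ≤ uval i x Ψ' := bnd_le_uval i x hι' hw'
  · have hw0 : ρ.w i = 0 := by
      by_contra h
      rcases lt_or_gt_of_ne h with hlt | hgt
      · exact hΨ ⟨ρ, hmem, hlt⟩
      · exact hnot hgt
    have : zsat i x Ψ := ⟨ρ, hmem, hw0, by unfold cv; rw [hw0]; simpa using hev⟩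
    rw [lval_bot i x this]; exact bot_le
  · have hw0 : ρ.w i = 0 := by
      by_contra h
      rcases lt_or_gt_of_ne h with hlt | hgt
      · exact hnot hlt
      · exact hΨ' ⟨ρ, hmem, hgt⟩
    have : zsat i x Ψ' := ⟨ρ, hmem, hw0, by unfold cv; rw [hw0]; simpa using hev⟩
    rw [uval_top i x this]; exact le_top

/-- Key step for the recursion: bounding `lval` of a resolution constraint. -/
lemma lval_cpres_cases {Ψ C₀ : Constraint D} {b : EReal} (hΨ : ¬ hasNeg i Ψ)
    (hb : lval i x (CPres i Ψ C₀) ≤ b) :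
    lval i x Ψ ≤ uval i x C₀ ∨ lval i x C₀ ≤ b := by
  by_contra hcon
  push_neg at hcon
  obtain ⟨hn1, hn2⟩ := hcon
  have hz : ¬ zsat i x (CPres i Ψ C₀) := by
    rintro ⟨ρ, hρ, hw0, hc0⟩
    rcases (mem_CPres i).1 hρ with ⟨ι, hι, ι', hι', hw, hw', rfl⟩ | ⟨hmem, hnot⟩ | ⟨hmem, hnot⟩
    · rw [cv_rsv i x hw hw'] at hc0
      have : lval i x Ψ ≤ uval i x C₀ :=
        calc lval i x Ψ ≤ ((bnd i x ι : ℝ) : EReal) := lval_le_bnd i x hι hw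
          _ ≤ ((bnd i x ι' : ℝ) : EReal) := EReal.coe_le_coe_iff.2 (by linarith)
          _ ≤ uval i x C₀ := bnd_le_uval i x hι' hw'
      exact absurd this hn1.not_ge
    · have : zsat i x Ψ := ⟨ρ, hmem, hw0, hc0⟩
      exact absurd (lval_bot i x this ▸ (bot_le : (⊥:EReal) ≤ uval i x C₀)) hn1.not_ge
    · have : zsat i x C₀ := ⟨ρ, hmem, hw0, hc0⟩
      exact absurd (lval_bot i x this ▸ (bot_le : (⊥:EReal) ≤ b)) hn2.not_ge
  rw [lval, if_neg hz, inf_top_eq] at hb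
  have hbt : b < ⊤ := lt_of_lt_of_le hn2 le_top
  have : b < ((CPres i Ψ C₀).filter fun ι => 0 < ι.w i).inf
      fun ι => ((bnd i x ι : ℝ) : EReal) := by
    rw [Finset.lt_inf_iff hbt]
    intro ρ hρ'
    rw [Finset.mem_filter] at hρ'
    obtain ⟨hρ, hwpos⟩ := hρ'
    rcases (mem_CPres i).1 hρ with ⟨ι, hι, ι', hι', hw, hw', rfl⟩ | ⟨hmem, hnot⟩ | ⟨hmem, hnot⟩
    · rw [rsv_w_self i hw hw'] at hwpos; exact absurd hwpos (lt_irrefl 0)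
    · exact absurd hwpos hnot
    · have : ρ.w i > 0 := hwpos
      exact lt_of_lt_of_le hn2 (lval_le_bnd i x hmem hwpos)
  exact absurd hb this.not_ge

end Res

end DisjElim
namespace DisjElim

variable {D : ℕ}

section Iter

variable (i : Fin D) (x : Fin D → ℝ)

lemma iterRes_nonneg {pm p0 : Finset (Constraint D)} (h0 : ∀ C ∈ p0, ¬ hasNeg i C) :
    ∀ k, ∀ Ψ ∈ iterRes i pm p0 k, ¬ hasNeg i Ψ := by
  intro k
  induction k with
  | zero => exact h0
  | succ k ih =>
    intro Ψ hΨ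
    simp only [iterRes, Finset.mem_image, Finset.mem_product, Prod.exists] at hΨ
    obtain ⟨a, b, ⟨ha, _⟩, rfl⟩ := hΨ
    exact cpres_nonneg i (ih a ha)

lemma iterRes_mono {pm pm' p0 : Finset (Constraint D)} (h : pm ⊆ pm') :
    ∀ k, iterRes i pm p0 k ⊆ iterRes i pm' p0 k := by
  intro k
  induction k with
  | zero => exact fun _ h => h
  | succ k ih =>
    intro Ψ hΨ
    simp only [iterRes, Finset.mem_image, Finset.mem_product, Prod.exists] at hΨ ⊢
    obtain ⟨a, b, ⟨ha, hb⟩, rfl⟩ := hΨ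
    exact ⟨a, b, ⟨ih ha, h hb⟩, rfl⟩

lemma mem_iterRes_succ {pm p0 : Finset (Constraint D)} {Ψ C₀ : Constraint D} {k : ℕ}
    (hΨ : Ψ ∈ iterRes i pm p0 k) (hC : C₀ ∈ pm) :
    CPres i Ψ C₀ ∈ iterRes i pm p0 (k + 1) := by
  simp only [iterRes, Finset.mem_image, Finset.mem_product, Prod.exists]
  exact ⟨Ψ, C₀, ⟨hΨ, hC⟩, rfl⟩

lemma iterRes_sound {Pi : Finset (Constraint D)} {y : Fin D → ℝ} (hy : SatAll Pi y) :
    ∀ k, ∀ Ψ ∈ iterRes i (mixPart i Pi) (posPart i Pi) k, Ψ.Sat y := by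
  intro k
  induction k with
  | zero =>
    intro Ψ hΨ
    exact hy Ψ (Finset.mem_filter.1 hΨ).1
  | succ k ih =>
    intro Ψ hΨ
    simp only [iterRes, Finset.mem_image, Finset.mem_product, Prod.exists] at hΨ
    obtain ⟨a, b, ⟨ha, hb⟩, rfl⟩ := hΨ
    exact cpres_sound i (ih a ha) (hy b (Finset.mem_filter.1 hb).1)

lemma elimVar_sound {Pi : Finset (Constraint D)} {y : Fin D → ℝ} (hy : SatAll Pi y) :
    SatAll (elimVar i Pi) y := by
  intro C hC
  rcases Finset.mem_union.1 hC with hC | hC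
  · exact hy C (Finset.mem_filter.1 hC).1
  · simp only [Finset.mem_image, Finset.mem_product, Prod.exists] at hC
    obtain ⟨a, b, ⟨ha, hb⟩, rfl⟩ := hC
    simp only [closurePlus, Finset.mem_biUnion, Finset.mem_range] at ha
    obtain ⟨k, _, ha⟩ := ha
    exact cpres_sound i (iterRes_sound i hy k a ha) (hy b (Finset.mem_filter.1 hb).1)

/-- The core combinatorial lemma: given the resolution closure hypotheses, a common
satisfying value below `b` exists for the positive and mixed constraints. -/
lemma core (Pos : Finset (Constraint D)) (hPos : ∀ C ∈ Pos, hasPos i C ∧ ¬ hasNeg i C) :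
    ∀ (n : ℕ) (M : Finset (Constraint D)), M.card ≤ n →
    (∀ C ∈ M, hasPos i C ∧ hasNeg i C) →
    ∀ b : EReal, ⊥ < b →
    (∀ k ≤ M.card, ∀ Ψ ∈ iterRes i M Pos k, lval i x Ψ ≤ b) →
    ∃ t : ℝ, (t : EReal) ≤ b ∧ (∀ C ∈ Pos, C.Sat (Function.update x i t)) ∧
      (∀ C ∈ M, C.Sat (Function.update x i t)) := by
  intro n
  induction n with
  | zero =>
    intro M hcard hM b hbbot hRes
    have hMemp : M = ∅ := Finset.card_eq_zero.1 (Nat.le_zero.1 hcard)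
    subst hMemp
    -- choose t ≤ b above all lvals of Pos
    have hlt : ∀ C ∈ Pos, lval i x C < ⊤ := fun C hC => lval_lt_top i x (hPos C hC).1
    have hResP : ∀ C ∈ Pos, lval i x C ≤ b := fun C hC => hRes 0 (le_refl 0) C hC
    rcases eq_or_lt_of_le (le_top : b ≤ ⊤) with hb | hb
    · -- b = ⊤ : take t above the (finite) sup of lvals
      have hsup : Pos.sup (fun C => lval i x C) < ⊤ :=
        (Finset.sup_lt_iff (bot_lt_top)).2 hlt
      obtain ⟨t, ht1, _⟩ := EReal.lt_iff_exists_real_btwn.1 hsup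
      refine ⟨t, by rw [hb]; exact le_top, fun C hC => ?_, fun C hC => absurd hC (by simp)⟩
      exact sat_of_lval_le i x (le_of_lt (lt_of_le_of_lt (Finset.le_sup hC) ht1))
    · -- b real
      obtain ⟨b₀, rfl⟩ : ∃ b₀ : ℝ, b = (b₀ : EReal) := by
        induction b with
        | bot => exact absurd hbbot (lt_irrefl _)
        | coe b₀ => exact ⟨b₀, rfl⟩
        | top => exact absurd hb (lt_irrefl _)
      exact ⟨b₀, le_refl _, fun C hC => sat_of_lval_le i x (hResP C hC),
        fun C hC => absurd hC (by simp)⟩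
  | succ n ih =>
    intro M hcard hM b hbbot hRes
    rcases eq_or_lt_of_le (le_top : b ≤ ⊤) with hb | hb
    · -- b = ⊤ : take t above all lvals of Pos ∪ M
      have hlt : ∀ C ∈ Pos ∪ M, lval i x C < ⊤ := by
        intro C hC
        rcases Finset.mem_union.1 hC with h | h
        · exact lval_lt_top i x (hPos C h).1
        · exact lval_lt_top i x (hM C h).1
      have hsup : (Pos ∪ M).sup (fun C => lval i x C) < ⊤ :=
        (Finset.sup_lt_iff (bot_lt_top)).2 hlt
      obtain ⟨t, ht1, _⟩ := EReal.lt_iff_exists_real_btwn.1 hsup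
      refine ⟨t, by rw [hb]; exact le_top, fun C hC => ?_, fun C hC => ?_⟩
      · exact sat_of_lval_le i x
          (le_of_lt (lt_of_le_of_lt (Finset.le_sup (Finset.mem_union_left _ hC)) ht1))
      · exact sat_of_lval_le i x
          (le_of_lt (lt_of_le_of_lt (Finset.le_sup (Finset.mem_union_right _ hC)) ht1))
    · obtain ⟨b₀, rfl⟩ : ∃ b₀ : ℝ, b = (b₀ : EReal) := by
        induction b with
        | bot => exact absurd hbbot (lt_irrefl _)
        | coe b₀ => exact ⟨b₀, rfl⟩
        | top => exact absurd hb (lt_irrefl _)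
      by_cases hA : ∀ C ∈ M, uval i x C < (b₀ : EReal) → lval i x C ≤ (b₀ : EReal)
      · -- t := b₀ works
        refine ⟨b₀, le_refl _, fun C hC => sat_of_lval_le i x (hRes 0 (Nat.zero_le _) C hC),
          fun C hC => ?_⟩
        rcases lt_or_ge (uval i x C) (b₀ : EReal) with h | h
        · exact sat_of_lval_le i x (hA C hC h)
        · exact sat_of_le_uval i x h
      · push_neg at hA
        obtain ⟨C₀, hC₀M, hu, hl⟩ := hA
        -- recurse on M.erase C₀ with bound uval C₀
        have hbu : ⊥ < uval i x C₀ := bot_lt_uval i x (hM C₀ hC₀M).2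
        have hcard' : (M.erase C₀).card ≤ n := by
          rw [Finset.card_erase_of_mem hC₀M]
          omega
        have hM' : ∀ C ∈ M.erase C₀, hasPos i C ∧ hasNeg i C :=
          fun C hC => hM C (Finset.mem_of_mem_erase hC)
        have hRes' : ∀ k ≤ (M.erase C₀).card, ∀ Ψ ∈ iterRes i (M.erase C₀) Pos k,
            lval i x Ψ ≤ uval i x C₀ := by
          intro k hk Ψ hΨ
          have hΨM : Ψ ∈ iterRes i M Pos k :=
            iterRes_mono i (Finset.erase_subset _ _) k hΨ
          have hk1 : k + 1 ≤ M.card := by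
            rw [Finset.card_erase_of_mem hC₀M] at hk
            have : 1 ≤ M.card := Finset.card_pos.2 ⟨C₀, hC₀M⟩
            omega
          have hmem : CPres i Ψ C₀ ∈ iterRes i M Pos (k + 1) :=
            mem_iterRes_succ i hΨM hC₀M
          have hle := hRes (k + 1) hk1 _ hmem
          have hΨnn : ¬ hasNeg i Ψ :=
            iterRes_nonneg i (fun C hC => (hPos C hC).2) k Ψ hΨ
          rcases lval_cpres_cases i x hΨnn hle with h | h
          · exact h
          · exact absurd h hl.not_ge
        obtain ⟨t, ht1, ht2, ht3⟩ := ih (M.erase C₀) hcard' hM' (uval i x C₀) hbu hRes'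
        refine ⟨t, le_of_lt (lt_of_le_of_lt ht1 hu), ht2, fun C hC => ?_⟩
        rcases eq_or_ne C C₀ with rfl | hne
        · exact sat_of_le_uval i x ht1
        · exact ht3 C (Finset.mem_erase.2 ⟨hne, hC⟩)

end Iter

end DisjElim
namespace DisjElim

variable {D : ℕ}

section Ext

variable (i : Fin D) (x : Fin D → ℝ)

/-- Extendibility (Lemma 3): a satisfying assignment of `elimVar i Π` extends to `Π`. -/
lemma elimVar_ext {Pi : Finset (Constraint D)} (hx : SatAll (elimVar i Pi) x) :
    ∃ t : ℝ, SatAll Pi (Function.update x i t) := by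
  classical
  set b : EReal := (negPart i Pi).inf (fun C => uval i x C) with hbdef
  have hbbot : ⊥ < b := by
    rw [hbdef, Finset.lt_inf_iff (by exact bot_lt_top)]
    intro C hC
    exact bot_lt_uval i x (Finset.mem_filter.1 hC).2.2
  have hPos : ∀ C ∈ posPart i Pi, hasPos i C ∧ ¬ hasNeg i C :=
    fun C hC => (Finset.mem_filter.1 hC).2
  have hM : ∀ C ∈ mixPart i Pi, hasPos i C ∧ hasNeg i C :=
    fun C hC => (Finset.mem_filter.1 hC).2
  have hRes : ∀ k ≤ (mixPart i Pi).card,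
      ∀ Ψ ∈ iterRes i (mixPart i Pi) (posPart i Pi) k, lval i x Ψ ≤ b := by
    intro k hk Ψ hΨ
    rw [hbdef, Finset.le_inf_iff]
    intro C' hC'
    have hΨc : Ψ ∈ closurePlus i Pi := by
      simp only [closurePlus, Finset.mem_biUnion, Finset.mem_range]
      exact ⟨k, by omega, hΨ⟩
    have hmem : CPres i Ψ C' ∈ elimVar i Pi := by
      apply Finset.mem_union_right
      simp only [Finset.mem_image, Finset.mem_product, Prod.exists]
      exact ⟨Ψ, C', ⟨hΨc, hC'⟩, rfl⟩
    have hΨnn : ¬ hasNeg i Ψ :=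
      iterRes_nonneg i (fun C hC => (hPos C hC).2) k Ψ hΨ
    exact sat_cpres_neg i x hΨnn (Finset.mem_filter.1 hC').2.1 (hx _ hmem)
  obtain ⟨t, ht1, ht2, ht3⟩ :=
    core i x (posPart i Pi) hPos (mixPart i Pi).card (mixPart i Pi) (le_refl _) hM b hbbot hRes
  refine ⟨t, fun C hC => ?_⟩
  by_cases hp : hasPos i C <;> by_cases hn : hasNeg i C
  · exact ht3 C (Finset.mem_filter.2 ⟨hC, hp, hn⟩)
  · exact ht2 C (Finset.mem_filter.2 ⟨hC, hp, hn⟩)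
  · -- negative constraint : t ≤ b ≤ uval C
    refine sat_of_le_uval i x (le_trans ht1 ?_)
    rw [hbdef]
    exact Finset.inf_le (Finset.mem_filter.2 ⟨hC, hp, hn⟩)
  · -- free constraint : satisfied at x, independent of coordinate i
    obtain ⟨ι, hι, hev⟩ := hx C (Finset.mem_union_left _ (Finset.mem_filter.2 ⟨hC, hp, hn⟩))
    have hw0 : ι.w i = 0 := by
      by_contra h
      rcases lt_or_gt_of_ne h with hlt | hgt
      · exact hn ⟨ι, hι, hlt⟩
      · exact hp ⟨ι, hι, hgt⟩
    refine ⟨ι, hι, ?_⟩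
    rw [ge_iff_le, sat_zero i x hw0]
    have := eval_self i x ι
    rw [hw0] at this
    rw [ge_iff_le] at hev
    linarith [hev]

end Ext

section Occ

/-- Variable `j` does not occur in constraint `C`. -/
def NoOcc (j : Fin D) (C : Constraint D) : Prop := ∀ ι ∈ C, ι.w j = 0

lemma cpres_noOcc {i j : Fin D} {Ψ Ψ' : Constraint D} (h1 : NoOcc j Ψ) (h2 : NoOcc j Ψ') :
    NoOcc j (CPres i Ψ Ψ') := by
  intro ρ hρ
  rcases (mem_CPres i).1 hρ with ⟨ι, hι, ι', hι', _, _, rfl⟩ | ⟨hmem, _⟩ | ⟨hmem, _⟩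
  · show ι.w j / ι.w i - ι'.w j / ι'.w i = 0
    rw [h1 ι hι, h2 ι' hι']
    simp
  · exact h1 ρ hmem
  · exact h2 ρ hmem

lemma elimVar_noOcc_self (i : Fin D) (Pi : Finset (Constraint D)) :
    ∀ C ∈ elimVar i Pi, NoOcc i C := by
  intro C hC
  rcases Finset.mem_union.1 hC with hC | hC
  · intro ι hι
    obtain ⟨_, hp, hn⟩ := Finset.mem_filter.1 hC
    by_contra h
    rcases lt_or_gt_of_ne h with hlt | hgt
    · exact hn ⟨ι, hι, hlt⟩
    · exact hp ⟨ι, hι, hgt⟩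
  · simp only [Finset.mem_image, Finset.mem_product, Prod.exists] at hC
    obtain ⟨a, b, ⟨ha, hb⟩, rfl⟩ := hC
    simp only [closurePlus, Finset.mem_biUnion, Finset.mem_range] at ha
    obtain ⟨k, _, ha⟩ := ha
    have hann : ¬ hasNeg i a :=
      iterRes_nonneg i (fun C hC => (Finset.mem_filter.1 hC).2.2) k a ha
    have hbnp : ¬ hasPos i b := (Finset.mem_filter.1 hb).2.1
    intro ρ hρ
    rcases (mem_CPres i).1 hρ with ⟨ι, hι, ι', hι', hw, hw', rfl⟩ | ⟨hmem, hnot⟩ | ⟨hmem, hnot⟩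
    · exact rsv_w_self i hw hw'
    · by_contra h
      rcases lt_or_gt_of_ne h with hlt | hgt
      · exact hann ⟨ρ, hmem, hlt⟩
      · exact hnot hgt
    · by_contra h
      rcases lt_or_gt_of_ne h with hlt | hgt
      · exact hnot hlt
      · exact hbnp ⟨ρ, hmem, hgt⟩

lemma elimVar_noOcc_other {i j : Fin D} {Pi : Finset (Constraint D)}
    (h : ∀ C ∈ Pi, NoOcc j C) : ∀ C ∈ elimVar i Pi, NoOcc j C := by
  have hiter : ∀ k, ∀ Ψ ∈ iterRes i (mixPart i Pi) (posPart i Pi) k, NoOcc j Ψ := by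
    intro k
    induction k with
    | zero => exact fun Ψ hΨ => h Ψ (Finset.mem_filter.1 hΨ).1
    | succ k ih =>
      intro Ψ hΨ
      simp only [iterRes, Finset.mem_image, Finset.mem_product, Prod.exists] at hΨ
      obtain ⟨a, b, ⟨ha, hb⟩, rfl⟩ := hΨ
      exact cpres_noOcc (ih a ha) (h b (Finset.mem_filter.1 hb).1)
  intro C hC
  rcases Finset.mem_union.1 hC with hC | hC
  · exact h C (Finset.mem_filter.1 hC).1
  · simp only [Finset.mem_image, Finset.mem_product, Prod.exists] at hC
    obtain ⟨a, b, ⟨ha, hb⟩, rfl⟩ := hC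
    simp only [closurePlus, Finset.mem_biUnion, Finset.mem_range] at ha
    obtain ⟨k, _, ha⟩ := ha
    exact cpres_noOcc (hiter k a ha) (h b (Finset.mem_filter.1 hb).1)

lemma piSeq_noOcc (Pi : Finset (Constraint D)) :
    ∀ m, ∀ C ∈ piSeq Pi m, ∀ j : Fin D, D - m ≤ j.val → NoOcc j C := by
  intro m
  induction m with
  | zero =>
    intro C _ j hj
    exact absurd (lt_of_le_of_lt hj j.isLt) (by omega)
  | succ m ih =>
    intro C hC j hj
    rw [piSeq] at hC
    by_cases h : D - 1 - m < D
    · rw [dif_pos h] at hC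
      rcases eq_or_ne j.val (D - 1 - m) with hje | hje
      · have : j = ⟨D - 1 - m, h⟩ := Fin.ext hje
        rw [this]
        exact elimVar_noOcc_self _ _ C hC
      · have hj' : D - m ≤ j.val := by omega
        exact elimVar_noOcc_other (fun C' hC' => ih C' hC' j hj') C hC
    · exact absurd (lt_of_le_of_lt (Nat.zero_le _) j.isLt) (by omega)

lemma piSeq_sound {Pi : Finset (Constraint D)} {y : Fin D → ℝ} (hy : SatAll Pi y) :
    ∀ m, SatAll (piSeq Pi m) y := by
  intro m
  induction m with
  | zero => exact hy
  | succ m ih =>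
    rw [piSeq]
    by_cases h : D - 1 - m < D
    · rw [dif_pos h]; exact elimVar_sound _ ih
    · rw [dif_neg h]; exact ih

lemma piSeq_succ_eq {Pi : Finset (Constraint D)} {k : ℕ} (h : k < D) :
    piSeq Pi (D - k) = elimVar ⟨k, h⟩ (piSeq Pi (D - 1 - k)) := by
  have h1 : D - k = (D - 1 - k) + 1 := by omega
  rw [h1, piSeq]
  have h2 : D - 1 - (D - 1 - k) = k := by omega
  rw [dif_pos (by omega : D - 1 - (D - 1 - k) < D)]
  congr 1
  exact Fin.ext h2

end Occ

end DisjElim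
namespace DisjElim

variable {D : ℕ}

section Refine

lemma ereal_coe_sSup {A : Set ℝ} (h1 : A.Nonempty) (h2 : BddAbove A) :
    sSup ((fun s : ℝ => (s : EReal)) '' A) = ((sSup A : ℝ) : EReal) := by
  apply IsLUB.sSup_eq
  constructor
  · rintro _ ⟨a, ha, rfl⟩
    exact EReal.coe_le_coe_iff.2 (le_csSup h2 ha)
  · intro c hc
    induction c with
    | bot =>
      obtain ⟨a, ha⟩ := h1
      exact absurd (hc ⟨a, ha, rfl⟩) (EReal.bot_lt_coe a).not_ge
    | coe c =>
      exact EReal.coe_le_coe_iff.2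
        (csSup_le h1 (fun a ha => EReal.coe_le_coe_iff.1 (hc ⟨a, ha, rfl⟩)))
    | top => exact le_top

lemma ereal_coe_sInf {A : Set ℝ} (h1 : A.Nonempty) (h2 : BddBelow A) :
    sInf ((fun s : ℝ => (s : EReal)) '' A) = ((sInf A : ℝ) : EReal) := by
  apply IsGLB.sInf_eq
  constructor
  · rintro _ ⟨a, ha, rfl⟩
    exact EReal.coe_le_coe_iff.2 (csInf_le h2 ha)
  · intro c hc
    induction c with
    | bot => exact bot_le
    | coe c =>
      exact EReal.coe_le_coe_iff.2
        (le_csInf h1 (fun a ha => EReal.coe_le_coe_iff.1 (hc ⟨a, ha, rfl⟩)))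
    | top =>
      obtain ⟨a, ha⟩ := h1
      exact absurd (hc ⟨a, ha, rfl⟩) (EReal.coe_lt_top a).not_ge

lemma refine_mem {S : Set ℝ} (hS : IsClosed S) (hne : S.Nonempty) (t : ℝ) :
    refine S t ∈ S := by
  by_cases ht : t ∈ S
  · rw [refine, if_pos ht]; exact ht
  · rw [refine, if_neg ht]
    have hIic : S ∩ Set.Iio t = S ∩ Set.Iic t := by
      ext s
      simp only [Set.mem_inter_iff, Set.mem_Iio, Set.mem_Iic]
      constructor
      · rintro ⟨h1, h2⟩; exact ⟨h1, h2.le⟩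
      · rintro ⟨h1, h2⟩
        exact ⟨h1, lt_of_le_of_ne h2 (fun he => ht (he ▸ h1))⟩
    have hIci : S ∩ Set.Ioi t = S ∩ Set.Ici t := by
      ext s
      simp only [Set.mem_inter_iff, Set.mem_Ioi, Set.mem_Ici]
      constructor
      · rintro ⟨h1, h2⟩; exact ⟨h1, h2.le⟩
      · rintro ⟨h1, h2⟩
        exact ⟨h1, lt_of_le_of_ne h2 (fun he => ht (he.symm ▸ h1))⟩
    have hsupmem : (S ∩ Set.Iio t).Nonempty → sSup (S ∩ Set.Iio t) ∈ S := by
      intro h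
      rw [hIic] at h ⊢
      have : sSup (S ∩ Set.Iic t) ∈ S ∩ Set.Iic t :=
        (hS.inter isClosed_Iic).csSup_mem h
          (BddAbove.mono Set.inter_subset_right bddAbove_Iic)
      exact this.1
    have hinfmem : (S ∩ Set.Ioi t).Nonempty → sInf (S ∩ Set.Ioi t) ∈ S := by
      intro h
      rw [hIci] at h ⊢
      have : sInf (S ∩ Set.Ici t) ∈ S ∩ Set.Ici t :=
        (hS.inter isClosed_Ici).csInf_mem h
          (BddBelow.mono Set.inter_subset_right bddBelow_Ici)
      exact this.1
    rcases Set.eq_empty_or_nonempty (S ∩ Set.Iio t) with hA | hA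
    · -- left side empty, so right side nonempty and chosen
      have hB : (S ∩ Set.Ioi t).Nonempty := by
        obtain ⟨s, hs⟩ := hne
        rcases lt_trichotomy s t with h | h | h
        · exact absurd hA (Set.nonempty_iff_ne_empty.1 ⟨s, hs, h⟩)
        · exact absurd (h ▸ hs) ht
        · exact ⟨s, hs, h⟩
      rw [hA]
      simp only [Set.image_empty, sSup_empty]
      have hcond : ¬ ((t : EReal) - ⊥ <
          sInf ((fun s : ℝ => (s : EReal)) '' (S ∩ Set.Ioi t)) - (t : EReal)) := by
        rw [EReal.sub_bot (EReal.coe_ne_bot t)]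
        exact not_top_lt
      rw [if_neg hcond]
      rw [ereal_coe_sInf hB (BddBelow.mono Set.inter_subset_right bddBelow_Ioi)]
      rw [EReal.toReal_coe]
      exact hinfmem hB
    · rcases Set.eq_empty_or_nonempty (S ∩ Set.Ioi t) with hB | hB
      · -- right side empty, left chosen
        rw [hB]
        simp only [Set.image_empty, sInf_empty]
        have hsupeq := ereal_coe_sSup hA (BddAbove.mono Set.inter_subset_right bddAbove_Iio)
        have hcond : (t : EReal) - sSup ((fun s : ℝ => (s : EReal)) '' (S ∩ Set.Iio t)) <
            (⊤ : EReal) - (t : EReal) := by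
          rw [hsupeq, EReal.top_sub_coe, ← EReal.coe_sub]
          exact EReal.coe_lt_top _
        rw [if_pos hcond, hsupeq, EReal.toReal_coe]
        exact hsupmem hA
      · have hsupeq := ereal_coe_sSup hA (BddAbove.mono Set.inter_subset_right bddAbove_Iio)
        have hinfeq := ereal_coe_sInf hB (BddBelow.mono Set.inter_subset_right bddBelow_Ioi)
        by_cases hcond : (t : EReal) - sSup ((fun s : ℝ => (s : EReal)) '' (S ∩ Set.Iio t)) <
            sInf ((fun s : ℝ => (s : EReal)) '' (S ∩ Set.Ioi t)) - (t : EReal)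
        · rw [if_pos hcond, hsupeq, EReal.toReal_coe]
          exact hsupmem hA
        · rw [if_neg hcond, hinfeq, EReal.toReal_coe]
          exact hinfmem hB

lemma feas_closed (Pi : Finset (Constraint D)) (i : Fin D) (v : Fin D → ℝ) :
    IsClosed (Feas Pi i v) := by
  have : Feas Pi i v = ⋂ C ∈ (Pi : Set (Constraint D)),
      ⋃ ι ∈ (C : Set (Ineq D)), {t : ℝ | 0 ≤ ι.eval (Function.update v i t)} := by
    ext t
    simp only [Feas, Set.mem_setOf_eq, SatAll, Constraint.Sat, Set.mem_iInter, Set.mem_iUnion,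
      Finset.mem_coe, ge_iff_le]
    constructor
    · intro h C hC
      obtain ⟨ι, hι, hev⟩ := h C hC
      exact ⟨ι, hι, hev⟩
    · intro h C hC
      obtain ⟨ι, hι, hev⟩ := h C hC
      exact ⟨ι, hι, hev⟩
  rw [this]
  apply isClosed_biInter
  intro C _
  apply (C.finite_toSet).isClosed_biUnion
  intro ι _
  have : {t : ℝ | 0 ≤ ι.eval (Function.update v i t)}
      = {t : ℝ | 0 ≤ ι.w i * t + cv i v ι} := by
    ext t; simp [eval_update]
  rw [this]
  exact isClosed_le continuous_const (by continuity)

end Refine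

section Main

variable (Pi : Finset (Constraint D)) (xt : Fin D → ℝ)

lemma drl_inv (hsat : ∃ y, SatAll Pi y) :
    ∀ k ≤ D, SatAll (piSeq Pi (D - k)) (drlAux Pi xt k) := by
  intro k
  induction k with
  | zero =>
    intro _
    obtain ⟨y, hy⟩ := hsat
    have hys := piSeq_sound hy D
    intro C hC
    obtain ⟨ι, hι, hev⟩ := hys C hC
    refine ⟨ι, hι, ?_⟩
    have hval : ι.eval (drlAux Pi xt 0) = ι.eval y := by
      unfold Ineq.eval
      congr 1
      apply Finset.sum_congr rfl
      intro j _
      rw [piSeq_noOcc Pi D C hC j (by omega) ι hι]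
      ring
    rw [hval]
    exact hev
  | succ k ih =>
    intro hk1
    have hk : k < D := by omega
    have ihs := ih (by omega)
    rw [piSeq_succ_eq hk] at ihs
    have hext := elimVar_ext ⟨k, hk⟩ (drlAux Pi xt k) ihs
    have hFne : (Feas (piSeq Pi (D - 1 - k)) ⟨k, hk⟩ (drlAux Pi xt k)).Nonempty := by
      obtain ⟨t, ht⟩ := hext
      exact ⟨t, ht⟩
    have hmem := refine_mem (feas_closed (piSeq Pi (D - 1 - k)) ⟨k, hk⟩ (drlAux Pi xt k))
      hFne (xt ⟨k, hk⟩)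
    have heq : drlAux Pi xt (k + 1) = Function.update (drlAux Pi xt k) ⟨k, hk⟩
        (refine (Feas (piSeq Pi (D - 1 - k)) ⟨k, hk⟩ (drlAux Pi xt k)) (xt ⟨k, hk⟩)) := by
      rw [drlAux, dif_pos hk]
    have : D - (k + 1) = D - 1 - k := by omega
    rw [this, heq]
    exact hmem

end Main

end DisjElim

open DisjElim in
/-- Guaranteed satisfaction of DRL (Theorem 1): for any finite satisfiable set of
constraints `Π` over `ℝ^D` and any sample `xt`, the refined sample `DRL(xt)` satisfies `Π`. -/
theorem stmt_15 {D : ℕ} (Pi : Finset (Constraint D)) (hsat : ∃ x, SatAll Pi x)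
    (xt : Fin D → ℝ) : SatAll Pi (DRL Pi xt) := by
  have h := drl_inv Pi xt hsat D (le_refl D)
  rw [Nat.sub_self] at h
  exact h
end

section
/- Optimality of DRL with respect to the variable ordering (Theorem 2): under the hypotheses of the guaranteed-satisfaction theorem, for each i = 1,…,D there is no x' ∈ Ω(Π) such that x'_j = DRL(x̃)_j for all j < i and |x̃_i - x'_i| < |x̃_i - DRL(x̃)_i|. -/
/-!
Each elimination step is sound (a CP resolvent is implied by its two premises) and removes the
eliminated variable, so every solution of `Π` solves `Π_i`, a system in `x_1, …, x_i` only.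
Hence a solution `x'` agreeing with `DRL(x̃)` on `x_1, …, x_{i-1}` puts `x'_i` into the
single-variable feasible set `Π̃_i` that DRL refines `x̃_i` against, and `refine` returns a point
of that set nearest to `x̃_i`.
-/

open scoped Classical

namespace EReal

lemma abs_sub_toReal_le_of_le {t d : ℝ} {x : EReal} (hx : (t : EReal) ≤ x)
    (hd : x - t ≤ d) : |t - x.toReal| ≤ d := by
  have hbot : x ≠ ⊥ := ne_bot_of_le_ne_bot (EReal.coe_ne_bot t) hx
  have htop : x ≠ ⊤ := by
    rintro rfl
    exact (EReal.coe_lt_top d).not_ge (EReal.top_sub_coe t ▸ hd)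
  lift x to ℝ using ⟨htop, hbot⟩
  norm_cast at hx hd
  rw [EReal.toReal_coe, abs_sub_comm, abs_of_nonneg (_root_.sub_nonneg.2 hx)]
  exact hd

lemma abs_sub_toReal_le_of_ge {t d : ℝ} {x : EReal} (hx : x ≤ t)
    (hd : (t : EReal) - x ≤ d) : |t - x.toReal| ≤ d := by
  have htop : x ≠ ⊤ := ne_top_of_le_ne_top (EReal.coe_ne_top t) hx
  have hbot : x ≠ ⊥ := by
    rintro rfl
    exact (EReal.coe_lt_top d).not_ge (EReal.coe_sub_bot t ▸ hd)
  lift x to ℝ using ⟨htop, hbot⟩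
  norm_cast at hx hd
  rw [EReal.toReal_coe, abs_of_nonneg (_root_.sub_nonneg.2 hx)]
  exact hd

end EReal

namespace DisjElim

variable {D : ℕ}

lemma abs_sub_refine_le {S : Set ℝ} {t s : ℝ} (hs : s ∈ S) :
    |t - refine S t| ≤ |t - s| := by
  by_cases ht : t ∈ S
  · simp [refine, ht]
  set L := sSup ((fun s : ℝ => (s : EReal)) '' (S ∩ Set.Iio t))
  set R := sInf ((fun s : ℝ => (s : EReal)) '' (S ∩ Set.Ioi t))
  have hLt : L ≤ t := sSup_le <| by
    rintro _ ⟨y, ⟨-, hy⟩, rfl⟩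
    exact EReal.coe_le_coe_iff.2 hy.le
  have htR : (t : EReal) ≤ R := le_sInf <| by
    rintro _ ⟨y, ⟨-, hy⟩, rfl⟩
    exact EReal.coe_le_coe_iff.2 hy.le
  -- `refine` moves `t` to the nearer of `L` and `R`, so it suffices to bound the smaller gap.
  have hmin : min ((t : EReal) - L) (R - t) ≤ ((|t - s| : ℝ) : EReal) := by
    rcases lt_or_gt_of_ne (ne_of_mem_of_not_mem hs ht) with hst | hts
    · have hsL : (s : EReal) ≤ L := le_sSup ⟨s, ⟨hs, hst⟩, rfl⟩
      rw [abs_of_pos (sub_pos.2 hst)]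
      exact min_le_of_left_le (EReal.sub_le_sub le_rfl hsL)
    · have hRs : R ≤ s := sInf_le ⟨s, ⟨hs, hts⟩, rfl⟩
      rw [abs_sub_comm, abs_of_pos (sub_pos.2 hts)]
      exact min_le_of_right_le (EReal.sub_le_sub hRs le_rfl)
  rw [refine, if_neg ht]
  split_ifs with hc
  · exact EReal.abs_sub_toReal_le_of_ge hLt (min_eq_left hc.le ▸ hmin)
  · exact EReal.abs_sub_toReal_le_of_le htR (min_eq_right (not_lt.1 hc) ▸ hmin)

def Constraint.Omits (k : Fin D) (C : Constraint D) : Prop := ∀ ι ∈ C, ι.w k = 0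

lemma Ineq.eval_congr {ι : Ineq D} {y z : Fin D → ℝ} (h : ∀ k, ι.w k ≠ 0 → y k = z k) :
    ι.eval y = ι.eval z := by
  unfold Ineq.eval
  congr 1
  refine Finset.sum_congr rfl fun k _ => ?_
  by_cases hk : ι.w k = 0
  · simp [hk]
  · rw [h k hk]

lemma SatAll.of_omits {Q : Finset (Constraint D)} {y z : Fin D → ℝ} (hy : SatAll Q y)
    (hQ : ∀ C ∈ Q, ∀ k, y k ≠ z k → C.Omits k) : SatAll Q z := by
  intro C hC
  obtain ⟨ι, hι, hy⟩ := hy C hC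
  refine ⟨ι, hι, ?_⟩
  rwa [← Ineq.eval_congr fun k hk => not_not.1 fun hyz => hk (hQ C hC k hyz ι hι)]

section Resolution

variable {i : Fin D} {Ψ Ψ' : Constraint D}

lemma mem_CPres_s16 {ι : Ineq D} (h : ι ∈ CPres i Ψ Ψ') :
    (∃ a ∈ Ψ, ∃ b ∈ Ψ', 0 < a.w i ∧ b.w i < 0 ∧
      ι = ⟨fun k => a.w k / a.w i - b.w k / b.w i, a.b / a.w i - b.b / b.w i⟩)
    ∨ (ι ∈ Ψ ∧ ¬ 0 < ι.w i) ∨ (ι ∈ Ψ' ∧ ¬ ι.w i < 0) := by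
  simp only [CPres, Finset.mem_union, Finset.mem_image, Finset.mem_product,
    Finset.mem_filter, Prod.exists] at h
  rcases h with (⟨a, b, ⟨⟨ha, hwa⟩, hb, hwb⟩, rfl⟩ | h) | h
  · exact Or.inl ⟨a, ha, b, hb, hwa, hwb, rfl⟩
  · exact Or.inr (Or.inl h)
  · exact Or.inr (Or.inr h)

lemma Ineq.eval_resolvent (a b : Ineq D) (x : Fin D → ℝ) :
    Ineq.eval ⟨fun k => a.w k / a.w i - b.w k / b.w i, a.b / a.w i - b.b / b.w i⟩ x
      = a.eval x / a.w i - b.eval x / b.w i := by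
  simp only [Ineq.eval, add_div, Finset.sum_div, sub_mul, Finset.sum_sub_distrib,
    div_mul_eq_mul_div]
  ring

lemma Constraint.Sat.CPres {x : Fin D → ℝ} (h : Ψ.Sat x) (h' : Ψ'.Sat x) :
    (CPres i Ψ Ψ').Sat x := by
  obtain ⟨a, ha, hax⟩ := h
  obtain ⟨b, hb, hbx⟩ := h'
  by_cases hwa : 0 < a.w i
  · by_cases hwb : b.w i < 0
    · refine ⟨⟨fun k => a.w k / a.w i - b.w k / b.w i, a.b / a.w i - b.b / b.w i⟩, ?_, ?_⟩
      · refine Finset.mem_union_left _ (Finset.mem_union_left _ ?_)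
        exact Finset.mem_image.2 ⟨(a, b), Finset.mem_product.2
          ⟨Finset.mem_filter.2 ⟨ha, hwa⟩, Finset.mem_filter.2 ⟨hb, hwb⟩⟩, rfl⟩
      · rw [ge_iff_le, Ineq.eval_resolvent, sub_nonneg]
        exact (div_nonpos_of_nonneg_of_nonpos hbx hwb.le).trans (div_nonneg hax hwa.le)
    · exact ⟨b, Finset.mem_union_right _ (Finset.mem_filter.2 ⟨hb, hwb⟩), hbx⟩
  · exact ⟨a, Finset.mem_union_left _
      (Finset.mem_union_right _ (Finset.mem_filter.2 ⟨ha, hwa⟩)), hax⟩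

lemma Constraint.Omits.CPres {k : Fin D} (h : Ψ.Omits k) (h' : Ψ'.Omits k) :
    (CPres i Ψ Ψ').Omits k := by
  intro ι hι
  rcases mem_CPres_s16 hι with ⟨a, ha, b, hb, -, -, rfl⟩ | ⟨hι, -⟩ | ⟨hι, -⟩
  · simp [h a ha, h' b hb]
  · exact h ι hι
  · exact h' ι hι

lemma not_hasNeg_CPres (h : ¬ hasNeg i Ψ) : ¬ hasNeg i (CPres i Ψ Ψ') := by
  rintro ⟨ι, hι, hneg⟩
  rcases mem_CPres_s16 hι with ⟨a, -, b, -, hwa, hwb, rfl⟩ | ⟨hι, -⟩ | ⟨-, hw⟩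
  · simp [div_self hwa.ne', div_self hwb.ne] at hneg
  · exact h ⟨ι, hι, hneg⟩
  · exact hw hneg

lemma CPres_omits_self (h : ¬ hasNeg i Ψ) (h' : ¬ hasPos i Ψ') : (CPres i Ψ Ψ').Omits i := by
  intro ι hι
  rcases mem_CPres_s16 hι with ⟨a, -, b, -, hwa, hwb, rfl⟩ | ⟨hι, hw⟩ | ⟨hι, hw⟩
  · simp [div_self hwa.ne', div_self hwb.ne]
  · exact le_antisymm (not_lt.1 hw) (not_lt.1 fun hneg => h ⟨ι, hι, hneg⟩)
  · exact le_antisymm (not_lt.1 fun hpos => h' ⟨ι, hι, hpos⟩) (not_lt.1 hw)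

end Resolution

section Elimination

variable {i : Fin D} {Q : Finset (Constraint D)}

lemma forall_mem_iterRes {P : Constraint D → Prop} {pm p0 : Finset (Constraint D)}
    (h0 : ∀ C ∈ p0, P C) (hstep : ∀ C, P C → ∀ C' ∈ pm, P (CPres i C C')) :
    ∀ m, ∀ C ∈ iterRes i pm p0 m, P C := by
  intro m
  induction m with
  | zero => exact h0
  | succ m ih =>
    simp only [iterRes, Finset.mem_image, Finset.mem_product, Prod.exists]
    rintro _ ⟨C, C', ⟨hC, hC'⟩, rfl⟩
    exact hstep C (ih C hC) C' hC'

lemma forall_mem_closurePlus {P : Constraint D → Prop}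
    (hpos : ∀ C ∈ posPart i Q, P C)
    (hstep : ∀ C, P C → ∀ C' ∈ mixPart i Q, P (CPres i C C')) :
    ∀ C ∈ closurePlus i Q, P C := by
  simp only [closurePlus, Finset.mem_biUnion]
  rintro C ⟨m, -, hC⟩
  exact forall_mem_iterRes hpos hstep m C hC

lemma forall_mem_elimVar {P : Constraint D → Prop} (hfree : ∀ C ∈ freePart i Q, P C)
    (hres : ∀ Ψ ∈ closurePlus i Q, ∀ Ψ' ∈ negPart i Q, P (CPres i Ψ Ψ')) :
    ∀ C ∈ elimVar i Q, P C := by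
  simp only [elimVar, Finset.mem_union, Finset.mem_image, Finset.mem_product, Prod.exists]
  rintro C (hC | ⟨Ψ, Ψ', ⟨hΨ, hΨ'⟩, rfl⟩)
  · exact hfree C hC
  · exact hres Ψ hΨ Ψ' hΨ'

lemma forall_mem_elimVar_of_forall {P : Constraint D → Prop} (hQ : ∀ C ∈ Q, P C)
    (hres : ∀ Ψ Ψ', P Ψ → P Ψ' → P (CPres i Ψ Ψ')) : ∀ C ∈ elimVar i Q, P C := by
  have hfilter : ∀ {p : Constraint D → Prop} [DecidablePred p] C, C ∈ Q.filter p → P C :=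
    fun C hC => hQ C (Finset.mem_filter.1 hC).1
  refine forall_mem_elimVar hfilter fun Ψ hΨ Ψ' hΨ' => hres _ _ ?_ (hfilter Ψ' hΨ')
  exact forall_mem_closurePlus hfilter (fun C hC C' hC' => hres _ _ hC (hfilter C' hC')) Ψ hΨ

lemma SatAll.elimVar {x : Fin D → ℝ} (hx : SatAll Q x) : SatAll (elimVar i Q) x :=
  forall_mem_elimVar_of_forall hx fun _ _ => Constraint.Sat.CPres

lemma elimVar_omits {k : Fin D} (hQ : ∀ C ∈ Q, C.Omits k) :
    ∀ C ∈ elimVar i Q, C.Omits k :=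
  forall_mem_elimVar_of_forall hQ fun _ _ => Constraint.Omits.CPres

-- Members of `Π_i^{++}` have no negative and members of `Π_i^-` no positive occurrence of `x_i`,
-- so every resolvent between them is free of `x_i`.
lemma elimVar_omits_self : ∀ C ∈ elimVar i Q, C.Omits i := by
  refine forall_mem_elimVar ?_ fun Ψ hΨ Ψ' hΨ' =>
    CPres_omits_self ?_ (Finset.mem_filter.1 hΨ').2.1
  · intro C hC ι hι
    obtain ⟨-, hpos, hneg⟩ := Finset.mem_filter.1 hC
    exact le_antisymm (not_lt.1 fun h => hpos ⟨ι, hι, h⟩)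
      (not_lt.1 fun h => hneg ⟨ι, hι, h⟩)
  · exact forall_mem_closurePlus (fun C hC => (Finset.mem_filter.1 hC).2.2)
      (fun C hC _ _ => not_hasNeg_CPres hC) Ψ hΨ

end Elimination

lemma SatAll.piSeq {Pi : Finset (Constraint D)} {x : Fin D → ℝ} (hx : SatAll Pi x) :
    ∀ m, SatAll (piSeq Pi m) x
  | 0 => hx
  | m + 1 => by
    rw [DisjElim.piSeq]
    split
    · exact (hx.piSeq m).elimVar
    · exact hx.piSeq m

lemma piSeq_omits (Pi : Finset (Constraint D)) :
    ∀ m, ∀ C ∈ piSeq Pi m, ∀ k : Fin D, D - m ≤ k → C.Omits k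
  | 0 => fun _ _ k hk => absurd k.isLt (by omega)
  | m + 1 => by
    rw [DisjElim.piSeq]
    split
    next h =>
      intro C hC k hk
      by_cases hki : k.val = D - 1 - m
      · obtain rfl : k = ⟨D - 1 - m, h⟩ := Fin.ext hki
        exact elimVar_omits_self C hC
      · exact elimVar_omits (fun C' hC' => piSeq_omits Pi m C' hC' k (by omega)) C hC
    · intro C hC k hk
      exact piSeq_omits Pi m C hC k (by omega)

lemma drlAux_apply_of_le (Pi : Finset (Constraint D)) (x : Fin D → ℝ) {n m : ℕ}
    (hnm : n ≤ m) {j : Fin D} (hj : j.val < n) : drlAux Pi x m j = drlAux Pi x n j := by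
  induction m, hnm using Nat.le_induction with
  | base => rfl
  | succ m hnm ih =>
    rw [drlAux]
    split
    · rw [Function.update_of_ne (Fin.ne_of_val_ne (by dsimp only; omega)), ih]
    · exact ih

lemma DRL_apply_of_lt (Pi : Finset (Constraint D)) (x : Fin D → ℝ) {j i : Fin D}
    (hji : j < i) : DRL Pi x j = drlAux Pi x i j :=
  drlAux_apply_of_le Pi x i.isLt.le hji

lemma DRL_apply (Pi : Finset (Constraint D)) (x : Fin D → ℝ) (i : Fin D) :
    DRL Pi x i = refine (Feas (piSeq Pi (D - 1 - i)) i (drlAux Pi x i)) (x i) := by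
  rw [DRL, drlAux_apply_of_le Pi x i.isLt (Nat.lt_succ_self _), drlAux, dif_pos i.isLt]
  exact Function.update_self ..

lemma mem_feas_piSeq {Pi : Finset (Constraint D)} {x v : Fin D → ℝ} (hx : SatAll Pi x)
    {i : Fin D} (hv : ∀ j < i, v j = x j) : x i ∈ Feas (piSeq Pi (D - 1 - i)) i v := by
  refine (hx.piSeq _).of_omits fun C hC k hk => piSeq_omits Pi _ C hC k ?_
  rcases lt_trichotomy k i with hki | rfl | hik
  · exact absurd ((hv k hki).symm.trans (Function.update_of_ne hki.ne ..).symm) hk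
  · simp at hk
  · have := Fin.lt_def.1 hik
    omega

end DisjElim

open DisjElim in
theorem stmt_16_general {D : ℕ} (Pi : Finset (Constraint D))
    (xt : Fin D → ℝ) (i : Fin D) :
    ¬ ∃ x' : Fin D → ℝ, SatAll Pi x' ∧ (∀ j : Fin D, j < i → x' j = DRL Pi xt j) ∧
      |xt i - x' i| < |xt i - DRL Pi xt i| := by
  rintro ⟨x', hx', hagree, hcloser⟩
  have hmem : x' i ∈ Feas (piSeq Pi (D - 1 - i)) i (drlAux Pi xt i) :=
    mem_feas_piSeq hx' fun j hj => (DRL_apply_of_lt Pi xt hj).symm.trans (hagree j hj).symm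
  rw [DRL_apply] at hcloser
  exact (abs_sub_refine_le hmem).not_gt hcloser

open DisjElim in
/-- Optimality of DRL with respect to the variable ordering (Theorem 2): for a finite
satisfiable set of constraints `Π` and any sample `xt`, for each coordinate `i` there is no
point `x'` of `Ω(Π)` agreeing with `DRL(xt)` on all earlier coordinates whose `i`-th
coordinate is strictly closer to `xt i` than `DRL(xt) i` is. -/
theorem stmt_16 {D : ℕ} (Pi : Finset (Constraint D)) (hsat : ∃ x, SatAll Pi x)
    (xt : Fin D → ℝ) (i : Fin D) :
    ¬ ∃ x' : Fin D → ℝ, SatAll Pi x' ∧ (∀ j : Fin D, j < i → x' j = DRL Pi xt j) ∧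
      |xt i - x' i| < |xt i - DRL Pi xt i| :=
  stmt_16_general Pi xt i
end
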